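/- Let AF = (A, R) be a Dung argumentation framework, Γ_AF = A ∪ { a ↣ b : (a,b) ∈ R } its translation into Nelson logic, and I an HT-model of Γ_AF. Let S_I := { a ∈ A : I ⊨ a }. Then: (1) if argument a is defeated with respect to S_I (i.e., there exists b ∈ S_I with (b,a) ∈ R), then I ⊩⁺ ~a; (2) S_I is conflict-free (no a ∈ S_I is defeated with respect to S_I). -/

import Mathlib

inductive Formula (Atom : Type) : Type
  | bot : Formula Atom
  | atom : Atom → Formula Atom
  | sneg : Formula Atom → Formula Atom
  | conj : Formula Atom → Formula Atom → Formula Atom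
  | disj : Formula Atom → Formula Atom → Formula Atom
  | impl : Formula Atom → Formula Atom → Formula Atom

structure NelsonInterp (Atom : Type) where
  W : Type
  le : W → W → Prop
  refl : ∀ w, le w w
  trans : ∀ {w₁ w₂ w₃}, le w₁ w₂ → le w₂ w₃ → le w₁ w₃
  Vp : W → Set Atom
  Vm : W → Set Atom
  monoP : ∀ {w w'}, le w w' → Vp w ⊆ Vp w'
  monoM : ∀ {w w'}, le w w' → Vm w ⊆ Vm w'

mutual
  def forceP {Atom : Type} (I : NelsonInterp Atom) (w : I.W) : Formula Atom → Prop
    | .bot => False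
    | .atom a => a ∈ I.Vp w
    | .sneg φ => forceM I w φ
    | .conj φ ψ => forceP I w φ ∧ forceP I w ψ
    | .disj φ ψ => forceP I w φ ∨ forceP I w ψ
    | .impl φ ψ => ∀ w', I.le w w' → (¬ forceP I w' φ ∨ forceP I w' ψ)
  def forceM {Atom : Type} (I : NelsonInterp Atom) (w : I.W) : Formula Atom → Prop
    | .bot => True
    | .atom a => a ∈ I.Vm w
    | .sneg φ => forceP I w φ
    | .conj φ ψ => forceM I w φ ∨ forceM I w ψ
    | .disj φ ψ => forceM I w φ ∧ forceM I w ψ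
    | .impl φ ψ => forceP I w φ ∧ forceM I w ψ
end

def Formula.neg {Atom : Type} (φ : Formula Atom) : Formula Atom := φ.impl .bot

def Formula.supImp {Atom : Type} (φ ψ : Formula Atom) : Formula Atom :=
  ((φ.sneg.neg).conj φ).impl ψ

def Formula.attack {Atom : Type} (φ ψ : Formula Atom) : Formula Atom :=
  φ.supImp ψ.sneg

/-- cw-inference at a world: `I,w ⊨ φ` iff `I,w ⊩⁺ ¬~φ ∧ φ`. -/
def cw {Atom : Type} (I : NelsonInterp Atom) (w : I.W) (φ : Formula Atom) : Prop :=
  forceP I w ((φ.sneg.neg).conj φ)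

/-- `I ⊩⁺ φ` : forcing at all worlds. -/
def forcedP {Atom : Type} (I : NelsonInterp Atom) (φ : Formula Atom) : Prop :=
  ∀ w, forceP I w φ

def forcedM {Atom : Type} (I : NelsonInterp Atom) (φ : Formula Atom) : Prop :=
  ∀ w, forceM I w φ

/-- `I ⊨ φ` : cw-inference at all worlds. -/
def cwAll {Atom : Type} (I : NelsonInterp Atom) (φ : Formula Atom) : Prop :=
  ∀ w, cw I w φ

def NelsonInterp.Consistent {Atom : Type} (I : NelsonInterp Atom) : Prop :=
  ∀ w, I.Vp w ∩ I.Vm w = ∅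

/-- An HT-interpretation: two worlds h ≤ t, given by four sets of atoms. -/
structure HTInterp (Atom : Type) where
  Hp : Set Atom
  Hm : Set Atom
  Tp : Set Atom
  Tm : Set Atom
  subP : Hp ⊆ Tp
  subM : Hm ⊆ Tm

/-- The underlying Nelson interpretation: world `false` is h, world `true` is t. -/
def HTInterp.toNelson {Atom : Type} (I : HTInterp Atom) : NelsonInterp Atom where
  W := Bool
  le := (· ≤ ·)
  refl := le_refl
  trans := le_trans
  Vp := fun w => if w then I.Tp else I.Hp
  Vm := fun w => if w then I.Tm else I.Hm
  monoP := by
    intro w w' hle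
    match w, w', hle with
    | false, false, _ => exact subset_rfl
    | false, true, _ => exact I.subP
    | true, true, _ => exact subset_rfl
    | true, false, h => exact absurd h (by decide)
  monoM := by
    intro w w' hle
    match w, w', hle with
    | false, false, _ => exact subset_rfl
    | false, true, _ => exact I.subM
    | true, true, _ => exact subset_rfl
    | true, false, h => exact absurd h (by decide)


def isHTModel {Atom : Type} (I : HTInterp Atom) (Γ : Set (Formula Atom)) : Prop :=
  ∀ φ ∈ Γ, ∀ w : Bool, forceP I.toNelson w φ

/-- The arguments consistently accepted by `I` among the arguments `A`. -/
def SI {Atom : Type} (I : HTInterp Atom) (A : Set Atom) : Set Atom :=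
  { a ∈ A | cwAll I.toNelson (Formula.atom a) }

/-- `I` is total and a ≤-minimal HT-model among models with the same `t`-valuations. -/
def Equilibrium {Atom : Type} (I : HTInterp Atom) (Γ : Set (Formula Atom)) : Prop :=
  I.Hp = I.Tp ∧ I.Hm = I.Tm ∧ isHTModel I Γ ∧
    ∀ J : HTInterp Atom, J.Tp = I.Tp → J.Tm = I.Tm → isHTModel J Γ →
      J.Hp = I.Tp ∧ J.Hm = I.Tm

/-- Translation of the Dung framework `(A, R)`. -/
def ThAF {Atom : Type} (A : Set Atom) (R : Atom → Atom → Prop) : Set (Formula Atom) :=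
  (Formula.atom '' A) ∪
    { f | ∃ a b, R a b ∧ f = (Formula.atom a).attack (Formula.atom b) }

def Defeated {Atom : Type} (R : Atom → Atom → Prop) (S : Set Atom) : Set Atom :=
  { a | ∃ b ∈ S, R b a }

namespace NelsonInterp

variable {Atom : Type} (I : NelsonInterp Atom) {w : I.W} {φ ψ : Formula Atom}

theorem forceP_of_supImp (himp : forceP I w (φ.supImp ψ)) (hφ : cw I w φ) : forceP I w ψ :=
  (himp w (I.refl w)).resolve_left (not_not_intro hφ)

theorem forceM_of_attack (hatt : forceP I w (φ.attack ψ)) (hφ : cw I w φ) : forceM I w ψ :=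
  I.forceP_of_supImp hatt hφ

theorem not_forceM_of_cw (hφ : cw I w φ) : ¬ forceM I w φ := fun hm =>
  ((hφ.1 w (I.refl w)).resolve_left (not_not_intro hm)).elim

end NelsonInterp

theorem forcedP_sneg_of_mem_defeated {Atom : Type} {A : Set Atom} {R : Atom → Atom → Prop}
    {I : HTInterp Atom} (hmod : isHTModel I (ThAF A R)) {a : Atom}
    (ha : a ∈ Defeated R (SI I A)) : forcedP I.toNelson (Formula.atom a).sneg := by
  obtain ⟨b, hb, hba⟩ := ha
  intro w
  exact I.toNelson.forceM_of_attack (hmod _ (Or.inr ⟨b, a, hba, rfl⟩) w) (hb.2 w)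

theorem af_model_properties {Atom : Type} (A : Set Atom) (R : Atom → Atom → Prop)
    (I : HTInterp Atom) (hmod : isHTModel I (ThAF A R)) :
    (∀ a ∈ A, a ∈ Defeated R (SI I A) → forcedP I.toNelson (Formula.atom a).sneg) ∧
    (∀ a ∈ SI I A, a ∉ Defeated R (SI I A)) :=
  ⟨fun _ _ ha => forcedP_sneg_of_mem_defeated hmod ha,
    fun _ haS ha => I.toNelson.not_forceM_of_cw (haS.2 false)
      (forcedP_sneg_of_mem_defeated hmod ha false)⟩
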